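/- arXiv:2311.17881 — 2 statements merged into one kernel-verified Lean document; each statement's English description precedes it below -/
import Mathlib

section
/- Let w be an admissible and irreducible word and t a dominant word with w > t (as finite words), and suppose t^∞ > z^∞ for every z ∈ RS(w). Then for all sufficiently large n there exists a positive integer m such that the word w^n t^m (n copies of w followed by m copies of t) is dominant. -/
/-- The set `Σ` of infinite paths in the graph with edge relation `E`. -/
def InSigma (E : ℕ → ℕ → Prop) (a : ℕ → ℕ) : Prop :=
  ∀ n : ℕ, E (a n) (a (n + 1))

/-- The shift map `σ`. -/
def shiftSeq (a : ℕ → ℕ) : ℕ → ℕ := fun n => a (n + 1)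

/-- The linear order on infinite sequences determined by the sign function `O`:
`a < b` iff they first differ at position `n` and `(∏_{k<n} O(a k)) * (a n - b n) < 0`. -/
def SeqLt (O : ℕ → ℤ) (a b : ℕ → ℕ) : Prop :=
  ∃ n : ℕ, (∀ k < n, a k = b k) ∧
    (∏ k ∈ Finset.range n, O (a k)) * ((a n : ℤ) - (b n : ℤ)) < 0

def SeqLe (O : ℕ → ℤ) (a b : ℕ → ℕ) : Prop :=
  SeqLt O a b ∨ a = b

/-- An element of `Σ` is admissible if it starts with `N` and all its shifts are `≤` itself. -/
def AdmissibleSeq (E : ℕ → ℕ → Prop) (O : ℕ → ℤ) (N : ℕ) (a : ℕ → ℕ) : Prop :=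
  InSigma E a ∧ a 0 = N ∧ ∀ n : ℕ, SeqLe O (shiftSeq^[n] a) a

/-- `w^∞`, the periodic sequence repeating the finite word `w`. -/
def perSeq (w : List ℕ) : ℕ → ℕ := fun n => w.getD (n % w.length) 0

/-- The infinite sequence starting with the word `w` followed by the sequence `s`. -/
def wordThen (w : List ℕ) (s : ℕ → ℕ) : ℕ → ℕ :=
  fun n => if n < w.length then w.getD n 0 else s (n - w.length)

/-- `sgn(w) = ∏_k O(w_k)`. -/
def wordSgn (O : ℕ → ℤ) (w : List ℕ) : ℤ := (w.map O).prod

/-- The partial order on finite words determined by `O`. -/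
def WordLt (O : ℕ → ℤ) (u v : List ℕ) : Prop :=
  ∃ j : ℕ, j < min u.length v.length ∧ (∀ k < j, u.getD k 0 = v.getD k 0) ∧
    (∏ k ∈ Finset.range j, O (u.getD k 0)) * ((u.getD j 0 : ℤ) - (v.getD j 0 : ℤ)) < 0

/-- A finite word is periodic if `w^∞ ∈ Σ` and `w` starts with the letter `N`. -/
def PeriodicWord (E : ℕ → ℕ → Prop) (N : ℕ) (w : List ℕ) : Prop :=
  w ≠ [] ∧ InSigma E (perSeq w) ∧ w.getD 0 0 = N

/-- A finite word is irreducible if it is not a concatenation of two or more copies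
of a shorter word. -/
def IrreducibleWord (w : List ℕ) : Prop :=
  ∀ (u : List ℕ) (k : ℕ), 2 ≤ k → w ≠ (List.replicate k u).flatten

/-- A finite word is extremal if it is periodic and `w^∞` is admissible. -/
def ExtremalWord (E : ℕ → ℕ → Prop) (O : ℕ → ℤ) (N : ℕ) (w : List ℕ) : Prop :=
  PeriodicWord E N w ∧ AdmissibleSeq E O N (perSeq w)

/-- A finite word is admissible if it is extremal and has sign `1`. -/
def AdmissibleWord (E : ℕ → ℕ → Prop) (O : ℕ → ℤ) (N : ℕ) (w : List ℕ) : Prop :=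
  ExtremalWord E O N w ∧ wordSgn O w = 1

/-- A finite word `w` is dominant if it is periodic and `Suff_k(wN) < Pre_k(w)`
for all `2 ≤ k ≤ |w|`. -/
def DominantWord (E : ℕ → ℕ → Prop) (O : ℕ → ℤ) (N : ℕ) (w : List ℕ) : Prop :=
  PeriodicWord E N w ∧ ∀ k : ℕ, 2 ≤ k → k ≤ w.length →
    WordLt O ((w ++ [N]).drop (w.length + 1 - k)) (w.take k)

/-- `a' = Next(a)`: `a'` is the immediate successor of `a` among periodic words
of the same length. Equivalently, `a = Prev(a')`. -/
def IsNext (E : ℕ → ℕ → Prop) (O : ℕ → ℤ) (N : ℕ) (a a' : List ℕ) : Prop :=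
  PeriodicWord E N a ∧ PeriodicWord E N a' ∧ a.length = a'.length ∧ WordLt O a a' ∧
    ∀ u : List ℕ, PeriodicWord E N u → u.length = a.length →
      ¬(WordLt O a u ∧ WordLt O u a')

/-- `(a, a')` is a tuning pair: `a` admissible, `a'` extremal of sign `-1`, `a' = Next(a)`. -/
def TuningPair (E : ℕ → ℕ → Prop) (O : ℕ → ℤ) (N : ℕ) (a a' : List ℕ) : Prop :=
  AdmissibleWord E O N a ∧ ExtremalWord E O N a' ∧ wordSgn O a' = -1 ∧ IsNext E O N a a'

/-- Condition (1) of tunability for the word `wmin`. -/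
def MinWord (E : ℕ → ℕ → Prop) (O : ℕ → ℤ) (N : ℕ) (wmin : List ℕ) : Prop :=
  PeriodicWord E N wmin ∧ wmin.count N = 1 ∧ wordSgn O wmin = -1 ∧
    PeriodicWord E N (wmin ++ [N]) ∧
    ∀ u : List ℕ, PeriodicWord E N u → u.length = wmin.length + 1 →
      u = wmin ++ [N] ∨ WordLt O (wmin ++ [N]) u

/-- `(Γ, O)` is tunable with minimal word `wmin`. -/
def Tunable (E : ℕ → ℕ → Prop) (O : ℕ → ℤ) (N : ℕ) (wmin : List ℕ) : Prop :=
  MinWord E O N wmin ∧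
    ∀ a : List ℕ, ExtremalWord E O N a → IrreducibleWord a → wordSgn O a = -1 →
      (∃ k : ℕ, Odd k ∧ a = (List.replicate k wmin).flatten) ∨
        ∃ a' : List ℕ, TuningPair E O N a' a

/-- The edge relation of `Γ₂`, the complete directed graph on `{0, 1}`. -/
def E2 : ℕ → ℕ → Prop := fun i j => i ≤ 1 ∧ j ≤ 1

/-- The sign function `O₂` of the binary setting: `O₂ 0 = 1`, `O₂ 1 = -1`. -/
def O2 : ℕ → ℤ := fun k => if k = 0 then 1 else -1

/-- The tuning `w * v` of a tuning pair `(w, w')` by a finite binary word `v`. -/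
def tuningWord (w w' : List ℕ) (v : List ℕ) : List ℕ :=
  (v.map fun i => if i = 0 then w else w').flatten

/-- The tuning `w * v` of a tuning pair `(w, w')` by an infinite binary sequence `v`. -/
def tuningSeq (w w' : List ℕ) (v : ℕ → ℕ) : ℕ → ℕ :=
  fun n => (if v (n / w.length) = 0 then w else w').getD (n % w.length) 0

/-- A word can be written as a tuning `a * v` with `|v| > 1`. -/
def IsTuning (E : ℕ → ℕ → Prop) (O : ℕ → ℤ) (N : ℕ) (x : List ℕ) : Prop :=
  ∃ (a a' v : List ℕ), TuningPair E O N a a' ∧ AdmissibleWord E2 O2 1 v ∧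
    1 < v.length ∧ x = tuningWord a a' v

/-- An admissible word is nonrenormalizable if it cannot be written as a tuning. -/
def Nonrenormalizable (E : ℕ → ℕ → Prop) (O : ℕ → ℤ) (N : ℕ) (w : List ℕ) : Prop :=
  AdmissibleWord E O N w ∧ ¬ IsTuning E O N w

/-- `PS(w)`: the set of common proper prefixes/suffixes `v` of `w` with `w = yv = vz`, `z₀ = N`. -/
def PS (N : ℕ) (w : List ℕ) : Set (List ℕ) :=
  {v | 0 < v.length ∧ v.length < w.length ∧ (∃ y, w = y ++ v) ∧
    ∃ z, w = v ++ z ∧ z.getD 0 0 = N}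

/-- `RS(w)`: the set of words `z` with `w = vz` for some `v ∈ PS(w)`. -/
def RS (N : ℕ) (w : List ℕ) : Set (List ℕ) :=
  {z | ∃ v ∈ PS N w, w = v ++ z}

/-- There is a walk of length `n` from `i` to `j` in the graph `E`. -/
def HasWalk (E : ℕ → ℕ → Prop) (i j n : ℕ) : Prop :=
  ∃ a : ℕ → ℕ, a 0 = i ∧ a n = j ∧ ∀ k < n, E (a k) (a (k + 1))

/-- The standing assumptions on `(Γ, O)`: vertex set `{0, …, N}`, `O` takes values in `{±1}`,
and the graph is strongly connected and aperiodic (equivalently, primitive). -/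
def GoodGraph (E : ℕ → ℕ → Prop) (O : ℕ → ℤ) (N : ℕ) : Prop :=
  (∀ i j, E i j → i ≤ N ∧ j ≤ N) ∧
  (∀ i, i ≤ N → O i = 1 ∨ O i = -1) ∧
  (∃ m : ℕ, 0 < m ∧ ∀ i j, i ≤ N → j ≤ N → HasWalk E i j m)

namespace S11

/-- product of signs along a sequence -/
def sprod (O : ℕ → ℤ) (a : ℕ → ℕ) (n : ℕ) : ℤ := ∏ k ∈ Finset.range n, O (a k)

lemma sprod_congr {O : ℕ → ℤ} {a b : ℕ → ℕ} {n : ℕ} (h : ∀ k < n, a k = b k) :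
    sprod O a n = sprod O b n :=
  Finset.prod_congr rfl (fun k hk => by rw [h k (Finset.mem_range.1 hk)])

lemma sprod_add (O : ℕ → ℤ) (a : ℕ → ℕ) (r d : ℕ) :
    sprod O a (r + d) = sprod O a r * sprod O (fun i => a (r + i)) d :=
  Finset.prod_range_add _ r d

lemma sprod_pm {O : ℕ → ℤ} {a : ℕ → ℕ} (h : ∀ i, O (a i) = 1 ∨ O (a i) = -1) (n : ℕ) :
    sprod O a n = 1 ∨ sprod O a n = -1 := by
  induction n with
  | zero => left; simp [sprod]
  | succ n ih =>
    have : sprod O a (n+1) = sprod O a n * O (a n) := Finset.prod_range_succ _ n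
    rcases ih with h1 | h1 <;> rcases h n with h2 | h2 <;>
      rw [this, h1, h2] <;> norm_num

/-- first-difference data for the sequence order -/
def FD (O : ℕ → ℤ) (a b : ℕ → ℕ) (n : ℕ) : Prop :=
  (∀ k < n, a k = b k) ∧ sprod O a n * ((a n : ℤ) - (b n : ℤ)) < 0

lemma seqLt_iff {O : ℕ → ℤ} {a b : ℕ → ℕ} : SeqLt O a b ↔ ∃ n, FD O a b n := Iff.rfl

lemma FD.ne {O : ℕ → ℤ} {a b : ℕ → ℕ} {n : ℕ} (h : FD O a b n) : a n ≠ b n := by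
  intro he
  have h2 := h.2
  rw [he, sub_self, mul_zero] at h2
  exact lt_irrefl 0 h2

lemma FD.trans {O : ℕ → ℤ} {a b c : ℕ → ℕ} {n n' : ℕ}
    (h : FD O a b n) (h' : FD O b c n') : FD O a c (min n n') := by
  rcases lt_trichotomy n n' with hl | he | hl
  · rw [min_eq_left hl.le]
    refine ⟨fun k hk => (h.1 k hk).trans (h'.1 k (hk.trans hl)), ?_⟩
    have hbc : ((b n : ℤ)) = c n := by exact_mod_cast congrArg (Nat.cast (R := ℤ)) (h'.1 n hl)
    have h2 := h.2
    rw [show ((a n : ℤ) - c n) = ((a n : ℤ) - b n) by rw [hbc]]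
    exact h2
  · subst he
    rw [min_self]
    refine ⟨fun k hk => (h.1 k hk).trans (h'.1 k hk), ?_⟩
    have hab : sprod O b n = sprod O a n := sprod_congr (fun k hk => (h.1 k hk).symm)
    have h2 := h.2
    have h3 := h'.2
    rw [hab] at h3
    nlinarith [h2, h3]
  · rw [min_eq_right hl.le]
    refine ⟨fun k hk => (h.1 k (hk.trans hl)).trans (h'.1 k hk), ?_⟩
    have hab : ((a n' : ℤ)) = b n' := by exact_mod_cast congrArg (Nat.cast (R := ℤ)) (h.1 n' hl)
    have hsp : sprod O a n' = sprod O b n' := sprod_congr (fun k hk => h.1 k (hk.trans hl))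
    have h3 := h'.2
    rw [show ((a n' : ℤ) - c n') = ((b n' : ℤ) - c n') by rw [hab], hsp]
    exact h3

lemma FD.asymm {O : ℕ → ℤ} {a b : ℕ → ℕ} {n n' : ℕ}
    (h : FD O a b n) (h' : FD O b a n') : False := by
  rcases lt_trichotomy n n' with hl | he | hl
  · exact h.ne (h'.1 n hl).symm
  · subst he
    have hab : sprod O b n = sprod O a n := sprod_congr (fun k hk => (h.1 k hk).symm)
    have h2 := h.2
    have h3 := h'.2
    rw [hab] at h3
    nlinarith [h2, h3]
  · exact h'.ne (h.1 n' hl).symm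

lemma FD.lt_of_per {O : ℕ → ℤ} {a b : ℕ → ℕ} {n L : ℕ} (h : FD O a b n) (hL : 0 < L)
    (ha : ∀ i, a (i + L) = a i) (hb : ∀ i, b (i + L) = b i) : n < L := by
  by_contra hn
  push_neg at hn
  have key : ∀ i, a i = b i := by
    intro i
    induction i using Nat.strong_induction_on with
    | _ i ih =>
      rcases Nat.lt_or_ge i L with hi | hi
      · exact h.1 i (lt_of_lt_of_le hi hn)
      · have hieq : i - L + L = i := by omega
        rw [← hieq, ha, hb]
        exact ih (i - L) (by omega)
  exact h.ne (key n)

lemma shift_iter : ∀ (q : ℕ) (a : ℕ → ℕ) (n : ℕ), (shiftSeq^[q] a) n = a (n + q)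
  | 0, _, n => by simp
  | (q+1), a, n => by
    rw [Function.iterate_succ_apply, shift_iter q (shiftSeq a) n]
    show a (n + q + 1) = a (n + (q + 1))
    rw [Nat.add_assoc]

lemma perSeq_period (w : List ℕ) (i : ℕ) : perSeq w (i + w.length) = perSeq w i := by
  unfold perSeq
  rw [Nat.add_mod_right]

lemma perSeq_eq (w : List ℕ) {i : ℕ} (h : i < w.length) : perSeq w i = w.getD i 0 := by
  unfold perSeq
  rw [Nat.mod_eq_of_lt h]

lemma perSeq_mul (w : List ℕ) (c i : ℕ) : perSeq w (c * w.length + i) = perSeq w i := by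
  induction c with
  | zero => simp
  | succ c ih =>
    have he : (c+1) * w.length + i = (c * w.length + i) + w.length := by ring
    rw [he, perSeq_period, ih]

lemma per_mul {a : ℕ → ℕ} {d : ℕ} (h : ∀ i, a (i + d) = a i) : ∀ c i, a (i + c * d) = a i := by
  intro c
  induction c with
  | zero => simp
  | succ c ih =>
    intro i
    have he : i + (c+1)*d = (i + c*d) + d := by ring
    rw [he, h, ih]

lemma per_gcd {a : ℕ → ℕ} : ∀ (p q : ℕ), (∀ i, a (i + p) = a i) → (∀ i, a (i + q) = a i) →
    ∀ i, a (i + Nat.gcd p q) = a i := by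
  intro p q
  induction p, q using Nat.gcd.induction with
  | H0 n => intro _ h; rw [Nat.gcd_zero_left]; exact h
  | H1 p q hp ih =>
    intro hpp hqp
    rw [Nat.gcd_rec]
    refine ih (fun i => ?_) hpp
    have h1 : i + q % p + q / p * p = i + q := by
      rw [Nat.add_assoc, Nat.mod_add_div']
    have h2 := per_mul hpp (q / p) (i + q % p)
    rw [h1] at h2
    rw [← h2, hqp]

lemma getD_drop (l : List ℕ) (a i : ℕ) : (l.drop a).getD i 0 = l.getD (a + i) 0 := by
  rw [List.getD_eq_getElem?_getD, List.getD_eq_getElem?_getD, List.getElem?_drop]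

lemma getD_take (l : List ℕ) {a i : ℕ} (h : i < a) : (l.take a).getD i 0 = l.getD i 0 := by
  rw [List.getD_eq_getElem?_getD, List.getD_eq_getElem?_getD, List.getElem?_take, if_pos h]

lemma getD_append (l l2 : List ℕ) {i : ℕ} (h : i < l.length) :
    (l ++ l2).getD i 0 = l.getD i 0 := by
  rw [List.getD_eq_getElem?_getD, List.getD_eq_getElem?_getD, List.getElem?_append_left h]

lemma getD_append_right (l l2 : List ℕ) {i : ℕ} (h : l.length ≤ i) :
    (l ++ l2).getD i 0 = l2.getD (i - l.length) 0 := by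
  rw [List.getD_eq_getElem?_getD, List.getD_eq_getElem?_getD, List.getElem?_append_right h]

lemma getElem_eq_getD (l : List ℕ) (i : ℕ) (h : i < l.length) : l[i] = l.getD i 0 :=
  (List.getD_eq_getElem l 0 h).symm

lemma flat_len (u : List ℕ) : ∀ k : ℕ, ((List.replicate k u).flatten).length = k * u.length := by
  intro k
  induction k with
  | zero => simp
  | succ k ih =>
    rw [List.replicate_succ, List.flatten_cons, List.length_append, ih]
    ring

lemma flat_getD (u : List ℕ) : ∀ (k i : ℕ), i < k * u.length →
    ((List.replicate k u).flatten).getD i 0 = u.getD (i % u.length) 0 := by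
  intro k
  induction k with
  | zero => intro i h; simp at h
  | succ k ih =>
    intro i h
    rw [List.replicate_succ, List.flatten_cons]
    rcases Nat.lt_or_ge i u.length with hi | hi
    · rw [getD_append _ _ hi, Nat.mod_eq_of_lt hi]
    · have hu : 0 < u.length := by
        rcases Nat.eq_zero_or_pos u.length with h0 | h0
        · rw [h0] at h; simp at h
        · exact h0
      rw [getD_append_right _ _ hi, ih (i - u.length) (by
        have : (k+1) * u.length = k * u.length + u.length := by ring
        omega), Nat.mod_eq_sub_mod hi]

lemma map_prod_getD (O : ℕ → ℤ) : ∀ (l : List ℕ),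
    (l.map O).prod = ∏ i ∈ Finset.range l.length, O (l.getD i 0) := by
  intro l
  induction l with
  | nil => simp
  | cons a l ih =>
    rw [List.map_cons, List.prod_cons, ih, List.length_cons, Finset.prod_range_succ']
    simp only [List.getD_cons_succ, List.getD_cons_zero]
    rw [mul_comm]

lemma sigma_ne {w : List ℕ} (hirr : IrreducibleWord w) (hw : 0 < w.length) {q : ℕ}
    (h1 : 0 < q) (h2 : q < w.length) : ∃ i, perSeq w (i + q) ≠ perSeq w i := by
  by_contra hc
  push_neg at hc
  have hLper : ∀ i, perSeq w (i + w.length) = perSeq w i := fun i => perSeq_period w i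
  have hg := per_gcd q w.length hc hLper
  set g := Nat.gcd q w.length with hgdef
  have hg0 : 0 < g := Nat.gcd_pos_of_pos_left _ h1
  have hgq : g ≤ q := Nat.le_of_dvd h1 (Nat.gcd_dvd_left _ _)
  have hgL : g ∣ w.length := Nat.gcd_dvd_right _ _
  obtain ⟨c, hc'⟩ := hgL
  have hcg : c * g = w.length := by rw [hc', Nat.mul_comm]
  have hc2 : 2 ≤ c := by
    by_contra hlt
    push_neg at hlt
    interval_cases c <;> simp at hcg <;> omega
  apply hirr (w.take g) c hc2
  have hlen : ((List.replicate c (w.take g)).flatten).length = w.length := by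
    rw [flat_len, List.length_take, min_eq_left (by omega)]
    exact hcg
  apply List.ext_getElem (by omega)
  intro i h1' h2'
  rw [getElem_eq_getD _ _ h1', getElem_eq_getD _ _ h2']
  have hig : i % g < g := Nat.mod_lt _ hg0
  have hflat : ((List.replicate c (w.take g)).flatten).getD i 0 = (w.take g).getD (i % g) 0 := by
    rw [flat_getD (w.take g) c i (by rw [List.length_take, min_eq_left (by omega)]; omega)]

    congr 1
    rw [List.length_take, min_eq_left (by omega)]
  rw [hflat, getD_take _ hig]
  -- w.getD i 0 = w.getD (i % g) 0 via periodicity g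
  have e1 : perSeq w i = perSeq w (i % g) := by
    have := per_mul hg (i / g) (i % g)
    have he : i % g + i / g * g = i := Nat.mod_add_div' i g
    rw [he] at this
    exact this
  rw [← perSeq_eq w h1', ← perSeq_eq w (lt_of_lt_of_le hig (by omega)), e1]

end S11

/-- If `w` is admissible and irreducible, `t` is dominant, `w > t` as finite
words, and `t^∞ > z^∞` for every `z ∈ RS(w)`, then for all sufficiently large `n` there
is a positive integer `m` such that `w^n t^m` is dominant. -/
theorem statement11 (E : ℕ → ℕ → Prop) (O : ℕ → ℤ) (N : ℕ) (hG : GoodGraph E O N)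
    (w t : List ℕ)
    (hw : AdmissibleWord E O N w) (hirr : IrreducibleWord w)
    (ht : DominantWord E O N t) (htw : WordLt O t w)
    (hz : ∀ z ∈ RS N w, SeqLt O (perSeq z) (perSeq t)) :
    ∃ M : ℕ, ∀ n : ℕ, M ≤ n → ∃ m : ℕ, 0 < m ∧
      DominantWord E O N ((List.replicate n w).flatten ++ (List.replicate m t).flatten) := by
  classical
  open S11 in
  obtain ⟨hEb, hOpm, -⟩ := hG
  obtain ⟨⟨⟨hwne, hwS, hw0⟩, hwA⟩, hwsgn⟩ := hw
  obtain ⟨⟨htne, htS, ht0⟩, hdom⟩ := ht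
  obtain ⟨-, -, hsh⟩ := hwA
  set A : ℕ → ℕ := perSeq w with hA
  set B : ℕ → ℕ := perSeq t with hB
  set L := w.length with hLdef
  set T := t.length with hTdef
  have hL : 0 < L := List.length_pos_iff.2 hwne
  have hT : 0 < T := List.length_pos_iff.2 htne
  have hAper : ∀ i, A (i + L) = A i := fun i => perSeq_period w i
  have hBper : ∀ i, B (i + T) = B i := fun i => perSeq_period t i
  have hAmul : ∀ c i, A (c * L + i) = A i := fun c i => perSeq_mul w c i
  have hBmul : ∀ c i, B (c * T + i) = B i := fun c i => perSeq_mul t c i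
  have hAeq : ∀ {i}, i < L → A i = w.getD i 0 := fun h => perSeq_eq w h
  have hBeq : ∀ {i}, i < T → B i = t.getD i 0 := fun h => perSeq_eq t h
  have hA0 : A 0 = N := by rw [hAeq hL]; exact hw0
  have hB0 : B 0 = N := by rw [hBeq hT]; exact ht0
  have HA : ∀ i, A i ≤ N := fun i => (hEb _ _ (hwS i)).1
  have OA : ∀ i, O (A i) = 1 ∨ O (A i) = -1 := fun i => hOpm _ (HA i)
  have hsgnA : sprod O A L = 1 := by
    have h1 : sprod O A L = ∏ i ∈ Finset.range w.length, O (w.getD i 0) := by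
      rw [hLdef]
      exact Finset.prod_congr rfl (fun i hi => by
        rw [hAeq (by rw [hLdef]; exact Finset.mem_range.1 hi)])
    rw [h1, ← map_prod_getD]
    exact hwsgn
  have hAmulL : ∀ c, sprod O A (c * L) = 1 := by
    intro c
    induction c with
    | zero => simp [sprod]
    | succ c ih =>
      have he : (c+1) * L = c*L + L := by ring
      rw [he, sprod_add, ih, one_mul]
      rw [show (sprod O (fun i => A (c*L + i)) L) = sprod O A L from
        sprod_congr (fun k _ => hAmul c k)]
      exact hsgnA
  have sigA : ∀ q, 0 < q → q < L → ∃ d, FD O (fun i => A (i + q)) A d ∧ d < L := by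
    intro q h0 h2
    have hiter : (shiftSeq^[q] A) = fun i => A (i + q) := funext (fun n => shift_iter q A n)
    rcases hsh q with hlt | heq
    · rw [hiter] at hlt
      obtain ⟨d, hd⟩ := hlt
      refine ⟨d, hd, FD.lt_of_per hd hL (fun i => ?_) hAper⟩
      show A (i + L + q) = A (i + q)
      rw [show i + L + q = (i + q) + L by ring, hAper]
    · rw [hiter] at heq
      obtain ⟨i, hi⟩ := sigma_ne hirr hL h0 h2
      exact absurd (congrFun heq i) hi
  -- htw extraction
  obtain ⟨j₀, hj₀m, hj₀e, hj₀s⟩ := htw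
  have hj₀T : j₀ < T := lt_of_lt_of_le hj₀m (min_le_left _ _)
  have hj₀L : j₀ < L := lt_of_lt_of_le hj₀m (min_le_right _ _)
  have hBAj : ∀ k < j₀, B k = A k := fun k hk => by
    rw [hBeq (hk.trans hj₀T), hAeq (hk.trans hj₀L)]; exact hj₀e k hk
  have hFDBA : FD O B A j₀ := by
    refine ⟨hBAj, ?_⟩
    have h1 : sprod O B j₀ = ∏ k ∈ Finset.range j₀, O (t.getD k 0) :=
      Finset.prod_congr rfl (fun k hk => by rw [hBeq ((Finset.mem_range.1 hk).trans hj₀T)])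
    have hBj : ((B j₀ : ℤ)) = ((t.getD j₀ 0 : ℕ) : ℤ) := by rw [hBeq hj₀T]
    have hAj : ((A j₀ : ℤ)) = ((w.getD j₀ 0 : ℕ) : ℤ) := by rw [hAeq hj₀L]
    rw [show (sprod O B j₀ * ((B j₀ : ℤ) - (A j₀ : ℤ))) =
      ((∏ k ∈ Finset.range j₀, O (t.getD k 0)) *
        (((t.getD j₀ 0 : ℕ) : ℤ) - ((w.getD j₀ 0 : ℕ) : ℤ))) by rw [h1, hBj, hAj]]
    exact hj₀s
  -- eps lemma
  have eps : ∀ r, 0 < r → r < L → (∀ i < r, A ((L - r) + i) = A i) → sprod O A r = -1 := by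
    intro r hr0 hrL hb
    have hq0 : 0 < L - r := by omega
    have hqL : L - r < L := by omega
    set q := L - r with hqdef
    obtain ⟨g, hgFD, hgL⟩ := sigA q hq0 hqL
    obtain ⟨g', hg'FD, _⟩ := sigA r hr0 hrL
    have hYa : ∀ i < r, A (i + q) = A i := fun i hi => by
      rw [Nat.add_comm]; exact hb i hi
    have hgr : r ≤ g := by
      by_contra hlt
      push_neg at hlt
      exact hgFD.ne (hYa g hlt)
    have hrq : r + q = L := by omega
    obtain ⟨gh, rfl⟩ : ∃ gh, g = r + gh := ⟨g - r, by omega⟩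
    have hXa : ∀ i < gh, A (i + r) = A i := by
      intro i hi
      have h1 : A ((r + i) + q) = A (r + i) := hgFD.1 (r + i) (by omega)
      rw [show (r + i) + q = i + L by omega, hAper] at h1
      rw [Nat.add_comm i r]
      exact h1.symm
    have hg'h : g' = gh := by
      by_contra hne
      rcases Nat.lt_or_ge g' gh with hlt | hge
      · exact hg'FD.ne (hXa g' hlt)
      · have hlt : gh < g' := by omega
        apply hgFD.ne
        show A ((r + gh) + q) = A (r + gh)
        rw [show (r + gh) + q = gh + L by omega, hAper]
        have h3 : A (gh + r) = A gh := hg'FD.1 gh hlt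
        rw [Nat.add_comm r gh]
        exact h3.symm
    have ineq1 : sprod O (fun i => A (i + q)) (r + gh) *
        ((A ((r + gh) + q) : ℤ) - (A (r + gh) : ℤ)) < 0 := hgFD.2
    have ineq2 : sprod O (fun i => A (i + r)) g' *
        ((A (g' + r) : ℤ) - (A g' : ℤ)) < 0 := hg'FD.2
    have hsplit : sprod O (fun i => A (i + q)) (r + gh) = sprod O A r * sprod O A gh := by
      rw [sprod_add]
      congr 1
      · exact sprod_congr hYa
      · apply sprod_congr
        intro k hk
        show A ((r + k) + q) = A k
        rw [show (r + k) + q = k + L by omega, hAper]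
    rw [hsplit, show (r + gh) + q = gh + L by omega, hAper, Nat.add_comm r gh] at ineq1
    rw [hg'h] at ineq2
    rw [show sprod O (fun i => A (i + r)) gh = sprod O A gh from sprod_congr hXa] at ineq2
    rcases sprod_pm OA r with he | he
    · exfalso
      rw [he, one_mul] at ineq1
      linarith
    · exact he
  -- the chain lemma
  have chain : ∀ r, 0 < r → r < L → (∀ i < r, A ((L - r) + i) = A i) → A r = N →
      SeqLt O (fun i => A (i + r)) B := by
    intro r hr0 hrL hb hArN
    have hq0 : 0 < L - r := by omega
    have hqL : L - r < L := by omega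
    set q := L - r with hqdef
    have hrq : r + q = L := by omega
    have hdq : w.drop q = w.take r := by
      apply List.ext_getElem (by simp [← hLdef]; omega)
      intro i h1 h2
      have hir : i < r := by
        have := h2
        rw [List.length_take] at this
        omega
      rw [getElem_eq_getD _ _ h1, getElem_eq_getD _ _ h2, getD_drop, getD_take _ hir]
      rw [← hAeq (show q + i < L by omega), ← hAeq (show i < L by omega)]
      exact hb i hir
    have hwsplit : w = w.take r ++ w.drop r := (List.take_append_drop r w).symm
    have hzRS : w.drop r ∈ RS N w := by
      refine ⟨w.take r, ⟨?_, ?_, ⟨w.take q, ?_⟩, ⟨w.drop r, hwsplit, ?_⟩⟩, hwsplit⟩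
      · rw [List.length_take]; omega
      · rw [List.length_take]; omega
      · rw [← hdq, List.take_append_drop]
      · rw [getD_drop, Nat.add_zero, ← hAeq hrL]
        exact hArN
    have hzB := hz (w.drop r) hzRS
    set Z := perSeq (w.drop r) with hZdef
    have hzlen : (w.drop r).length = q := by
      rw [List.length_drop, ← hLdef]
    have hZper : ∀ i, Z (i + q) = Z i := fun i => by
      have h1 := perSeq_period (w.drop r) i
      rw [hzlen] at h1; exact h1
    have hZeq : ∀ i < q, Z i = A (i + r) := by
      intro i hi
      have h1 : Z i = (w.drop r).getD i 0 := perSeq_eq _ (by rw [hzlen]; exact hi)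
      rw [h1, getD_drop, ← hAeq (show r + i < L by omega), Nat.add_comm r i]
    obtain ⟨e, hFDZB⟩ := hzB
    have hZA : FD O Z A (min e j₀) := FD.trans hFDZB hFDBA
    set g := min e j₀ with hgdef2
    have hXq : ∀ i, A ((q + i) + r) = A i := by
      intro i; rw [show (q + i) + r = i + L by omega, hAper]
    have hsz : sprod O (fun i => A (i + r)) q = -1 := by
      have h1 : (1:ℤ) = sprod O A r * sprod O (fun i => A (i + r)) q := by
        have h2 : sprod O (fun i => A (r + i)) q = sprod O (fun i => A (i + r)) q :=
          sprod_congr (fun k _ => by show A (r + k) = A (k + r); rw [Nat.add_comm])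
        rw [← hsgnA, show L = r + q by omega, sprod_add, h2]
      rw [eps r hr0 hrL hb] at h1
      linarith
    have hFDXZ : FD O (fun i => A (i + r)) Z (q + g) := by
      constructor
      · intro i hi
        rcases Nat.lt_or_ge i q with hiq | hiq
        · exact (hZeq i hiq).symm
        · obtain ⟨i', rfl⟩ : ∃ i', i = q + i' := ⟨i - q, by omega⟩
          show A ((q + i') + r) = Z (q + i')
          rw [hXq i', show q + i' = i' + q by omega, hZper]
          exact (hZA.1 i' (by omega)).symm
      · rw [sprod_add, hsz]
        have hs3 : sprod O (fun i => (fun j => A (j + r)) (q + i)) g = sprod O Z g := by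
          apply sprod_congr
          intro k hk
          show A ((q + k) + r) = Z k
          rw [hXq k]
          exact (hZA.1 k (by omega)).symm
        rw [hs3]
        show (-1 : ℤ) * sprod O Z g * ((A ((q + g) + r) : ℤ) - (Z (q + g) : ℤ)) < 0
        rw [hXq g, show q + g = g + q by omega, hZper]
        have h2 := hZA.2
        linarith
    exact ⟨min (q + g) e, FD.trans hFDXZ hFDZB⟩
  -- choice of m
  set D : ℕ → ℕ := fun r =>
    if h : ∃ nn, FD O (fun i => A (i + r)) B nn then h.choose else 0 with hDdef
  set m := 1 + (Finset.range L).sup D with hmdef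
  have hm1 : 1 ≤ m := by omega
  have hDspec : ∀ r, 0 < r → r < L → (∀ i < r, A ((L - r) + i) = A i) → A r = N →
      FD O (fun i => A (i + r)) B (D r) ∧ D r < m := by
    intro r h1 h2 h3 h4
    have hXB : ∃ nn, FD O (fun i => A (i + r)) B nn := seqLt_iff.1 (chain r h1 h2 h3 h4)
    constructor
    · have hD : D r = hXB.choose := by rw [hDdef]; exact dif_pos hXB
      rw [hD]; exact hXB.choose_spec
    · have hle : D r ≤ (Finset.range L).sup D := Finset.le_sup (Finset.mem_range.2 h2)
      omega
  refine ⟨m * T + L + 2, fun n hn => ⟨m, by omega, ?_⟩⟩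
  set s := (List.replicate n w).flatten ++ (List.replicate m t).flatten with hsdef
  have npos : 0 < n := by omega
  have hslen : s.length = n * L + m * T := by
    rw [hsdef, List.length_append, flat_len, flat_len, ← hLdef, ← hTdef]
  have hnL0 : 0 < n * L := Nat.mul_pos npos hL
  have hmT0 : 0 < m * T := Nat.mul_pos (by omega) hT
  have hLn : L ≤ n * L := Nat.le_mul_of_pos_left L npos
  have hTm : T ≤ m * T := Nat.le_mul_of_pos_left T (by omega)
  have hmmT : m ≤ m * T := Nat.le_mul_of_pos_right m hT
  have hnn : n ≤ n * L := Nat.le_mul_of_pos_right n hL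
  have hbig : L + m * T + 1 ≤ n * L := by omega
  set F : ℕ → ℕ := fun i => (s ++ [N]).getD i 0 with hFdef
  have hF1 : ∀ i, i < n * L → F i = A i := by
    intro i hi
    have hi' : i < s.length := by omega
    show (s ++ [N]).getD i 0 = A i
    rw [getD_append _ _ hi', hsdef,
      getD_append _ _ (by rw [flat_len, ← hLdef]; exact hi),
      flat_getD w n i (by rw [← hLdef]; exact hi), hA]
    rfl
  have hF2 : ∀ i, i < m * T → F (n * L + i) = B i := by
    intro i hi
    have h1 : n * L + i < s.length := by omega
    show (s ++ [N]).getD (n * L + i) 0 = B i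
    rw [getD_append _ _ h1, hsdef,
      getD_append_right _ _ (by rw [flat_len, ← hLdef]; omega)]
    rw [flat_len, ← hLdef, show n * L + i - n * L = i by omega,
      flat_getD t m i (by rw [← hTdef]; exact hi), hB]
    rfl
  have hF3 : F (n * L + m * T) = N := by
    show (s ++ [N]).getD (n * L + m * T) 0 = N
    rw [getD_append_right _ _ (by omega), show n * L + m * T - s.length = 0 by omega]
    rfl
  have hC1 : ∀ j, j + 1 < n * L + m * T → E (F j) (F (j + 1)) := by
    intro j hj
    rcases Nat.lt_or_ge (j + 1) (n * L) with h1 | h1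
    · rw [hF1 j (by omega), hF1 (j+1) h1]
      exact hwS j
    · rcases Nat.lt_or_ge j (n * L) with h2 | h2
      · have hj1 : j + 1 = n * L := by omega
        have hAj : A (j + 1) = N := by
          rw [hj1, show n * L = n * L + 0 by omega, hAmul n 0]
          exact hA0
        have h3 := hwS j
        rw [hAj] at h3
        rw [hF1 j h2, hj1, show n * L = n * L + 0 by omega, hF2 0 hmT0, hB0]
        exact h3
      · obtain ⟨i, rfl⟩ : ∃ i, j = n * L + i := ⟨j - n * L, by omega⟩
        rw [hF2 i (by omega), show n * L + i + 1 = n * L + (i + 1) by omega,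
          hF2 (i + 1) (by omega)]
        exact htS i
  have hsl : 0 < s.length := by omega
  refine ⟨⟨?_, ?_, ?_⟩, ?_⟩
  · intro hcon
    rw [hcon] at hsl
    simp at hsl
  · intro i
    have ha : i % s.length < s.length := Nat.mod_lt _ hsl
    have hstep : (i + 1) % s.length = (i % s.length + 1) % s.length := by
      conv_lhs => rw [Nat.add_mod]
      rw [Nat.mod_eq_of_lt (show 1 < s.length by omega)]
    have e1 : perSeq s i = F (i % s.length) := by
      show s.getD (i % s.length) 0 = F (i % s.length)
      exact (getD_append _ _ ha).symm
    have e2 : perSeq s (i+1) = F ((i+1) % s.length) := by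
      show s.getD ((i+1) % s.length) 0 = F ((i+1) % s.length)
      exact (getD_append _ _ (Nat.mod_lt _ hsl)).symm
    show E (perSeq s i) (perSeq s (i+1))
    rw [e1, e2]
    rcases Nat.lt_or_ge (i % s.length + 1) s.length with h1 | h1
    · rw [hstep, Nat.mod_eq_of_lt h1]
      exact hC1 _ (by omega)
    · have hend : i % s.length + 1 = s.length := by omega
      rw [hstep, hend, Nat.mod_self]
      have hFa : F (i % s.length) = B (m * T - 1) := by
        rw [show i % s.length = n * L + (m * T - 1) by omega]
        exact hF2 _ (by omega)
      have hF0 : F 0 = N := by rw [hF1 0 (by omega)]; exact hA0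
      rw [hFa, hF0]
      have h3 := htS (m * T - 1)
      have h4 : B (m * T - 1 + 1) = N := by
        rw [show m * T - 1 + 1 = m * T by omega, show m * T = m * T + 0 by omega,
          hBmul m 0]
        exact hB0
      rw [h4] at h3
      exact h3
  · have hf := hF1 0 (by omega)
    rw [hA0] at hf
    rw [← getD_append s [N] hsl]
    exact hf
  · intro k hk2 hkl
    set p := s.length + 1 - k with hpdef
    have hpk : p + k = n * L + m * T + 1 := by omega
    have hp1 : 1 ≤ p := by omega
    have main : ∀ j, j < k → (∀ i < j, F (p + i) = F i) →
        (sprod O (fun i => F (p + i)) j * ((F (p + j) : ℤ) - (F j : ℤ)) < 0) →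
        WordLt O ((s ++ [N]).drop p) (s.take k) := by
      intro j hjk heq hlt
      have hlen1 : ((s ++ [N]).drop p).length = k := by
        rw [List.length_drop, List.length_append, List.length_singleton]
        omega
      have hlen2 : (s.take k).length = k := by
        rw [List.length_take]
        omega
      refine ⟨j, ?_, ?_, ?_⟩
      · rw [hlen1, hlen2, min_self]
        exact hjk
      · intro k' hk'
        rw [getD_drop, getD_take _ (hk'.trans hjk),
          show s.getD k' 0 = F k' from (getD_append _ _ (by omega)).symm]
        exact heq k' hk'
      · have hprod : (∏ k' ∈ Finset.range j, O (((s ++ [N]).drop p).getD k' 0)) =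
            sprod O (fun i => F (p + i)) j :=
          Finset.prod_congr rfl (fun k' _ => by rw [getD_drop])
        rw [hprod, getD_drop, getD_take _ hjk,
          show s.getD j 0 = F j from (getD_append _ _ (by omega)).symm]
        exact hlt
    rcases Nat.lt_or_ge p (n * L) with hpA | hpB
    · -- CASE A : p inside the w-region
      have hqL : p % L < L := Nat.mod_lt _ hL
      have hpE : p / L * L + p % L = p := by
        rw [Nat.mul_comm]
        exact Nat.div_add_mod p L
      set i₀ := p / L with hi0d
      set q := p % L with hqd
      have hi₀n : i₀ < n := by
        by_contra hge
        push_neg at hge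
        have h1 : n * L ≤ i₀ * L := Nat.mul_le_mul_right L hge
        omega
      obtain ⟨c, hc⟩ : ∃ c, n = i₀ + c := ⟨n - i₀, by omega⟩
      have hc1 : 1 ≤ c := by omega
      have hnLsplit : n * L = i₀ * L + c * L := by rw [hc, Nat.add_mul]
      have hLc : L ≤ c * L := Nat.le_mul_of_pos_left L (by omega)
      rcases Nat.eq_zero_or_pos q with hq0 | hq0
      · -- q = 0
        have hi₀1 : 1 ≤ i₀ := by
          rcases Nat.eq_zero_or_pos i₀ with h0 | h0
          · rw [h0, zero_mul] at hpE
            omega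
          · exact h0
        have hcn : c + 1 ≤ n := by omega
        have hcL1 : (c + 1) * L = c * L + L := by rw [Nat.add_mul, one_mul]
        have hcLn : (c + 1) * L ≤ n * L := Nat.mul_le_mul_right L hcn
        have hFA : ∀ i, i < c * L → F (p + i) = F i := by
          intro i hi
          rw [hF1 (p + i) (by omega), hF1 i (by omega),
            show p + i = i₀ * L + i by omega]
          exact hAmul i₀ i
        have hFB : ∀ i, i < T → F (p + (c * L + i)) = B i := by
          intro i hi
          rw [show p + (c * L + i) = n * L + i by omega, hF2 i (by omega)]
        apply main (c * L + j₀) (by omega)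
        · intro i hi
          rcases Nat.lt_or_ge i (c * L) with h1 | h1
          · exact hFA i h1
          · obtain ⟨i', rfl⟩ : ∃ i', i = c * L + i' := ⟨i - c * L, by omega⟩
            have hi' : i' < j₀ := by omega
            rw [hFB i' (by omega), hF1 (c * L + i') (by omega), hBAj i' hi']
            exact (hAmul c i').symm
        · have hsp : sprod O (fun i => F (p + i)) (c * L + j₀) = sprod O B j₀ := by
            rw [sprod_add,
              show sprod O (fun i => F (p + i)) (c * L) = sprod O A (c * L) from
                sprod_congr (fun k' hk' => by
                  rw [hFA k' hk', hF1 k' (by omega)]),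
              hAmulL c, one_mul]
            exact sprod_congr (fun k' hk' => hFB k' (by omega))
          rw [hsp, hFB j₀ hj₀T, hF1 (c * L + j₀) (by omega),
            show A (c * L + j₀) = A j₀ from hAmul c j₀]
          exact hFDBA.2
      · -- q ≥ 1
        obtain ⟨d, hFDd, hdL⟩ := sigA q hq0 hqL
        have hYA : ∀ i, i < d → A (i + q) = A i := fun i hi => hFDd.1 i hi
        obtain ⟨rem, hrem⟩ : ∃ rem, q + rem = c * L := ⟨c * L - q, by omega⟩
        have hFw : ∀ i, i < rem → F (p + i) = A (i + q) := by
          intro i hi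
          rw [hF1 (p + i) (by omega), show p + i = i₀ * L + (q + i) by omega,
            hAmul i₀ (q + i), Nat.add_comm q i]
        rcases Nat.lt_or_ge d rem with hdr | hdr
        · apply main d (by omega)
          · intro i hi
            rw [hFw i (by omega), hYA i hi, hF1 i (by omega)]
          · have hsp : sprod O (fun i => F (p + i)) d =
                sprod O (fun i => A (i + q)) d :=
              sprod_congr (fun k' hk' => hFw k' (by omega))
            rw [hsp, hFw d hdr, hF1 d (by omega)]
            have h2 : sprod O (fun i => A (i + q)) d *
                ((A (d + q) : ℤ) - (A d : ℤ)) < 0 := hFDd.2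
            exact h2
        · -- rem ≤ d : last w-block, border situation
          have hcc : c = 1 := by
            by_contra hc2
            have h2 : 2 * L ≤ c * L := Nat.mul_le_mul_right L (by omega)
            omega
          have hcL : c * L = L := by rw [hcc, one_mul]
          have hr0 : 0 < rem := by omega
          have hrL : rem < L := by omega
          have hqrem : L - rem = q := by omega
          have border : ∀ i < rem, A ((L - rem) + i) = A i := by
            intro i hi
            rw [hqrem, Nat.add_comm q i]
            exact hYA i (by omega)
          by_cases hArN : A rem = N
          · -- genuine border: use the chain
            obtain ⟨hFDX, hDm⟩ := hDspec rem hr0 hrL border hArN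
            have hd'T : D rem < m * T := by omega
            have hXB1 : ∀ i, i < D rem → A (i + rem) = B i := fun i hi => hFDX.1 i hi
            have hFz : ∀ i, i < m * T → F (p + (rem + i)) = B i := by
              intro i hi
              rw [show p + (rem + i) = n * L + i by omega, hF2 i hi]
            apply main (rem + D rem) (by omega)
            · intro i hi
              rcases Nat.lt_or_ge i rem with h1 | h1
              · rw [hFw i (by omega), hYA i (by omega), hF1 i (by omega)]
              · obtain ⟨i', rfl⟩ : ∃ i', i = rem + i' := ⟨i - rem, by omega⟩
                have hi' : i' < D rem := by omega
                rw [hFz i' (by omega), hF1 (rem + i') (by omega),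
                  show A (rem + i') = A (i' + rem) by rw [Nat.add_comm]]
                exact (hXB1 i' hi').symm
            · have hsp : sprod O (fun i => F (p + i)) (rem + D rem) =
                  (-1) * sprod O B (D rem) := by
                rw [sprod_add]
                congr 1
                · rw [show sprod O (fun i => F (p + i)) rem = sprod O A rem from
                    sprod_congr (fun k' hk' => by
                      rw [hFw k' (by omega), hYA k' (by omega)])]
                  exact eps rem hr0 hrL border
                · exact sprod_congr (fun k' hk' => hFz k' (by omega))
              rw [hsp, hFz (D rem) hd'T, hF1 (rem + D rem) (by omega)]
              have h2 : sprod O (fun i => A (i + rem)) (D rem) *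
                  ((A (D rem + rem) : ℤ) - (B (D rem) : ℤ)) < 0 := hFDX.2
              rw [show sprod O (fun i => A (i + rem)) (D rem) = sprod O B (D rem) from
                sprod_congr hXB1] at h2
              rw [show A (rem + D rem) = A (D rem + rem) from by rw [Nat.add_comm]]
              linarith
          · -- A rem ≠ N : difference exactly at rem
            have hdrem : d = rem := by
              by_contra hne
              have hrd : rem < d := by omega
              have h1 : A (rem + q) = A rem := hFDd.1 rem hrd
              rw [show rem + q = 0 + L by omega, hAper] at h1
              exact hArN (by rw [← h1]; exact hA0)
            apply main rem (by omega)
            · intro i hi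
              rw [hFw i (by omega), hYA i (by omega), hF1 i (by omega)]
            · have hsp : sprod O (fun i => F (p + i)) rem =
                  sprod O (fun i => A (i + q)) rem :=
                sprod_congr (fun k' hk' => hFw k' (by omega))
              rw [hsp, hF1 rem (by omega),
                show F (p + rem) = B 0 from by
                  rw [show p + rem = n * L + 0 by omega]
                  exact hF2 0 hmT0]
              have h2 : sprod O (fun i => A (i + q)) d *
                  ((A (d + q) : ℤ) - (A d : ℤ)) < 0 := hFDd.2
              rw [hdrem] at h2
              rw [show A (rem + q) = A 0 from by
                rw [show rem + q = 0 + L by omega, hAper]] at h2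
              rw [hA0] at h2
              rw [hB0]
              exact h2
    · -- CASE B : p inside the t-region
      obtain ⟨j'', hpj⟩ : ∃ j'', p = n * L + j'' := ⟨p - n * L, by omega⟩
      have hj''ub : j'' < m * T := by omega
      have hjE : j'' / T * T + j'' % T = j'' := by
        rw [Nat.mul_comm]
        exact Nat.div_add_mod j'' T
      set jd := j'' / T with hjdd
      set jq := j'' % T with hjqd
      have hjqT : jq < T := Nat.mod_lt _ hT
      have hjdm : jd + 1 ≤ m := by
        by_contra hcon
        push_neg at hcon
        have h1 : m * T ≤ jd * T := Nat.mul_le_mul_right T (by omega)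
        omega
      have hjd1 : (jd + 1) * T = jd * T + T := by rw [Nat.add_mul, one_mul]
      have hjdmT : (jd + 1) * T ≤ m * T := Nat.mul_le_mul_right T hjdm
      rcases Nat.eq_zero_or_pos jq with hjq0 | hjq0
      · -- jq = 0
        have hFt : ∀ i, i < T → F (p + i) = B i := by
          intro i hi
          rw [show p + i = n * L + (jd * T + i) by omega, hF2 _ (by omega),
            hBmul jd i]
        apply main j₀ (by omega)
        · intro i hi
          rw [hFt i (by omega), hBAj i hi, hF1 i (by omega)]
        · rw [show sprod O (fun i => F (p + i)) j₀ = sprod O B j₀ from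
            sprod_congr (fun k' hk' => hFt k' (by omega)),
            hFt j₀ hj₀T, hF1 j₀ (by omega)]
          exact hFDBA.2
      · -- jq ≥ 1 : use dominance of t
        have hdom' := hdom (T - jq + 1) (by omega) (by omega)
        rw [show T + 1 - (T - jq + 1) = jq by omega] at hdom'
        obtain ⟨j', hj'm, hj'e, hj's⟩ := hdom'
        have hj'k : j' < T - jq + 1 := by
          have h1 : ((t ++ [N]).drop jq).length = T + 1 - jq := by
            rw [List.length_drop, List.length_append, List.length_singleton, ← hTdef]
          have h2 : (t.take (T - jq + 1)).length = T - jq + 1 := by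
            rw [List.length_take, ← hTdef]
            omega
          rw [h1, h2] at hj'm
          omega
        have hj'Tq : j' ≤ T - jq := by omega
        have htN1 : ∀ i, i < T → (t ++ [N]).getD i 0 = B i := by
          intro i hi
          rw [getD_append _ _ (by rw [← hTdef]; exact hi)]
          exact (hBeq hi).symm
        have htNT : (t ++ [N]).getD T 0 = N := by
          rw [getD_append_right _ _ (by rw [← hTdef]),
            show T - t.length = 0 by omega]
          rfl
        have hj'e' : ∀ i, i < j' → (t ++ [N]).getD (jq + i) 0 = B i := by
          intro i hi
          have h1 := hj'e i hi
          rw [getD_drop, getD_take _ (by omega)] at h1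
          rw [h1]
          exact (hBeq (by omega)).symm
        have hFs : ∀ i, i ≤ T - jq → F (p + i) = (t ++ [N]).getD (jq + i) 0 := by
          intro i hi
          rcases Nat.lt_or_ge (jq + i) T with h1 | h1
          · rw [show p + i = n * L + (jd * T + (jq + i)) by omega,
              hF2 _ (by omega), hBmul jd (jq + i), htN1 _ h1]
          · have h2 : jq + i = T := by omega
            rw [h2, htNT]
            rcases Nat.lt_or_ge ((jd + 1) * T) (m * T) with h3 | h3
            · rw [show p + i = n * L + (jd + 1) * T by omega, hF2 _ h3]
              have h4 := hBmul (jd + 1) 0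
              rw [Nat.add_zero] at h4
              rw [h4]
              exact hB0
            · rw [show p + i = n * L + m * T by omega]
              exact hF3
        have hjjj' : min j' j₀ ≤ j' := min_le_left _ _
        have hjjj0 : min j' j₀ ≤ j₀ := min_le_right _ _
        apply main (min j' j₀) (by omega)
        · intro i hi
          rw [hFs i (by omega), hj'e' i (by omega), hBAj i (by omega),
            hF1 i (by omega)]
        · have hsp : sprod O (fun i => F (p + i)) (min j' j₀) = sprod O B (min j' j₀) := by
            apply sprod_congr
            intro k' hk'
            rw [hFs k' (by omega), hj'e' k' (by omega)]
          have hj's2 : sprod O B j' *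
              (((t ++ [N]).getD (jq + j') 0 : ℤ) - (B j' : ℤ)) < 0 := by
            have hpr : (∏ k' ∈ Finset.range j', O (((t ++ [N]).drop jq).getD k' 0)) =
                sprod O B j' := by
              apply Finset.prod_congr rfl
              intro k' hk'
              rw [getD_drop, hj'e' k' (Finset.mem_range.1 hk')]
            have h1 := hj's
            rw [hpr, getD_drop, getD_take _ hj'k,
              ← hBeq (show j' < T by omega)] at h1
            exact h1
          rw [hsp, hFs (min j' j₀) (by omega), hF1 (min j' j₀) (by omega)]
          rcases lt_trichotomy j' j₀ with hlt | heq3 | hgt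
          · rw [min_eq_left hlt.le, ← hBAj j' hlt]
            exact hj's2
          · rw [heq3, min_self]
            rw [heq3] at hj's2
            have h6 := hFDBA.2
            linarith
          · rw [min_eq_right hgt.le, hj'e' j₀ hgt]
            exact hFDBA.2
end

section
/- Let (w, w') be a tuning pair. For any two infinite binary sequences v and v' that are admissible for (Γ₂, O₂), one has v < v' (in the order on binary sequences determined by O₂) if and only if w*v < w*v' (in the order on Σ determined by O). -/
-- auxiliary lemmas to be inserted above statement16

lemma prodMapEq (O : ℕ → ℤ) : ∀ u : List ℕ,
    (u.map O).prod = ∏ r ∈ Finset.range u.length, O (u.getD r 0) := by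
  intro u
  induction u with
  | nil => simp
  | cons a t ih =>
    rw [List.map_cons, List.prod_cons, List.length_cons, Finset.prod_range_succ']
    simp only [List.getD_cons_succ, List.getD_cons_zero]
    rw [ih, mul_comm]

lemma seqLt_irrefl (O : ℕ → ℤ) (a : ℕ → ℕ) : ¬ SeqLt O a a := by
  rintro ⟨n, _, hs⟩
  simp at hs

lemma seqLt_asymm (O : ℕ → ℤ) (a b : ℕ → ℕ) (h1 : SeqLt O a b) (h2 : SeqLt O b a) : False := by
  obtain ⟨n, hn, hns⟩ := h1
  obtain ⟨m, hm, hms⟩ := h2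
  rcases lt_trichotomy n m with h | h | h
  · have h0 : (a n : ℤ) - b n = 0 := by rw [hm n h]; ring
    rw [h0, mul_zero] at hns; exact absurd hns (by norm_num)
  · subst h
    have hP : (∏ k ∈ Finset.range n, O (a k)) = ∏ k ∈ Finset.range n, O (b k) :=
      Finset.prod_congr rfl fun k hk => by rw [hn k (Finset.mem_range.mp hk)]
    rw [hP] at hns
    nlinarith [hns, hms]
  · have h0 : (b m : ℤ) - a m = 0 := by rw [hn m h]; ring
    rw [h0, mul_zero] at hms; exact absurd hms (by norm_num)

lemma o2_trichotomy (v v' : ℕ → ℕ) (hne : v ≠ v') : SeqLt O2 v v' ∨ SeqLt O2 v' v := by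
  classical
  have hex : ∃ n, v n ≠ v' n := by
    by_contra h; push_neg at h; exact hne (funext h)
  set n := Nat.find hex with hn
  have hmin : ∀ k < n, v k = v' k := fun k hk => not_not.mp (Nat.find_min hex hk)
  have hP : (∏ k ∈ Finset.range n, O2 (v k)) ≠ 0 := by
    apply Finset.prod_ne_zero_iff.mpr
    intro k _
    unfold O2; split <;> norm_num
  have hd : ((v n : ℤ) - v' n) ≠ 0 := by
    have := Nat.find_spec hex
    intro h0
    exact this (by exact_mod_cast sub_eq_zero.mp h0)
  rcases (mul_ne_zero hP hd).lt_or_gt with h | h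
  · exact Or.inl ⟨n, hmin, h⟩
  · right
    refine ⟨n, fun k hk => (hmin k hk).symm, ?_⟩
    have hP2 : (∏ k ∈ Finset.range n, O2 (v' k)) = ∏ k ∈ Finset.range n, O2 (v k) :=
      Finset.prod_congr rfl fun k hk => by rw [hmin k (Finset.mem_range.mp hk)]
    rw [hP2]
    nlinarith [h]

lemma tuning_lt (E : ℕ → ℕ → Prop) (O : ℕ → ℤ) (N : ℕ)
    (w w' : List ℕ) (hpair : TuningPair E O N w w')
    (v v' : ℕ → ℕ) (hv1 : ∀ n, v n ≤ 1) (hv1' : ∀ n, v' n ≤ 1)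
    (h : SeqLt O2 v v') : SeqLt O (tuningSeq w w' v) (tuningSeq w w' v') := by
  obtain ⟨hadm, hext, hsgn', hnext⟩ := hpair
  have hsgnw : wordSgn O w = 1 := hadm.2
  have hlen : w.length = w'.length := hnext.2.2.1
  have hW : WordLt O w w' := hnext.2.2.2.1
  have hLpos : 0 < w.length := List.length_pos_iff.mpr hadm.1.1.1
  obtain ⟨j, hjlt, hjpre, hjsgn⟩ := hW
  have hjL : j < w.length := lt_of_lt_of_le hjlt (min_le_left _ _)
  obtain ⟨i, hipre, hisgn⟩ := h
  have hdiv : ∀ q r : ℕ, r < w.length → (q * w.length + r) / w.length = q := by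
    intro q r hr
    rw [mul_comm, Nat.mul_add_div hLpos, Nat.div_eq_of_lt hr]
    omega
  have hmod : ∀ q r : ℕ, r < w.length → (q * w.length + r) % w.length = r := by
    intro q r hr
    rw [mul_comm, Nat.mul_add_mod, Nat.mod_eq_of_lt hr]
  have heval : ∀ (u : ℕ → ℕ) (q r : ℕ), r < w.length →
      tuningSeq w w' u (q * w.length + r) = (if u q = 0 then w else w').getD r 0 := by
    intro u q r hr
    simp only [tuningSeq, hdiv q r hr, hmod q r hr]
  -- block sign
  have hblock : ∀ (u : ℕ → ℕ), (∀ n, u n ≤ 1) → ∀ q : ℕ,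
      (∏ r ∈ Finset.range w.length, O ((if u q = 0 then w else w').getD r 0)) = O2 (u q) := by
    intro u hu q
    by_cases h0 : u q = 0
    · rw [if_pos h0, h0, ← prodMapEq]
      exact hsgnw
    · have h1 : u q = 1 := by have := hu q; omega
      rw [if_neg h0, h1, hlen, ← prodMapEq]
      exact hsgn'
  -- head product
  have hhead : ∀ (u : ℕ → ℕ), (∀ n, u n ≤ 1) → ∀ i : ℕ,
      (∏ m ∈ Finset.range (i * w.length), O (tuningSeq w w' u m)) =
        ∏ k ∈ Finset.range i, O2 (u k) := by
    intro u hu i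
    induction i with
    | zero => simp
    | succ i ih =>
      rw [Finset.prod_range_succ, ← ih]
      have he : (i + 1) * w.length = i * w.length + w.length := by ring
      rw [he, Finset.prod_range_add]
      congr 1
      rw [← hblock u hu i]
      exact Finset.prod_congr rfl fun r hr => by
        rw [heval u i r (Finset.mem_range.mp hr)]
  -- prefix equality
  have hprefix : ∀ m < i * w.length + j,
      tuningSeq w w' v m = tuningSeq w w' v' m := by
    intro m hm
    have hdm := Nat.div_add_mod m w.length
    have hr : m % w.length < w.length := Nat.mod_lt _ hLpos
    have hqle : m / w.length ≤ i := by
      have h2 : m < (i + 1) * w.length := by nlinarith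
      have := (Nat.div_lt_iff_lt_mul hLpos).mpr h2
      omega
    rcases lt_or_eq_of_le hqle with hq | hq
    · show (if v (m / w.length) = 0 then w else w').getD (m % w.length) 0 =
        (if v' (m / w.length) = 0 then w else w').getD (m % w.length) 0
      rw [hipre _ hq]
    · have hrj : m % w.length < j := by
        have : w.length * (m / w.length) + m % w.length = m := hdm
        rw [hq] at this
        nlinarith
      show (if v (m / w.length) = 0 then w else w').getD (m % w.length) 0 =
        (if v' (m / w.length) = 0 then w else w').getD (m % w.length) 0
      split_ifs with h1 h2 h2
      · rfl
      · exact hjpre _ hrj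
      · exact (hjpre _ hrj).symm
      · rfl
  -- total product
  have hprod : (∏ m ∈ Finset.range (i * w.length + j), O (tuningSeq w w' v m)) =
      (∏ k ∈ Finset.range i, O2 (v k)) * ∏ r ∈ Finset.range j, O (w.getD r 0) := by
    rw [Finset.prod_range_add, hhead v hv1 i]
    congr 1
    refine Finset.prod_congr rfl fun r hr => ?_
    have hrj := Finset.mem_range.mp hr
    rw [heval v i r (lt_trans hrj hjL)]
    split_ifs with h0
    · rfl
    · exact congrArg O (hjpre r hrj).symm
  refine ⟨i * w.length + j, hprefix, ?_⟩
  rw [hprod, heval v i j hjL, heval v' i j hjL]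
  have hvi : v i = 0 ∨ v i = 1 := by have := hv1 i; omega
  have hvi' : v' i = 0 ∨ v' i = 1 := by have := hv1' i; omega
  rcases hvi with h0 | h0 <;> rcases hvi' with h1 | h1 <;> rw [h0, h1] at hisgn ⊢
  · simp at hisgn
  · rw [show (if (0:ℕ) = 0 then w else w') = w from rfl,
       show (if (1:ℕ) = 0 then w else w') = w' from rfl]
    have hP2 : 0 < ∏ k ∈ Finset.range i, O2 (v k) := by
      push_cast at hisgn; nlinarith
    rw [mul_assoc]
    exact mul_neg_of_pos_of_neg hP2 hjsgn
  · rw [show (if (1:ℕ) = 0 then w else w') = w' from rfl,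
       show (if (0:ℕ) = 0 then w else w') = w from rfl]
    have hP2 : (∏ k ∈ Finset.range i, O2 (v k)) < 0 := by
      push_cast at hisgn; nlinarith
    nlinarith [mul_pos_of_neg_of_neg hP2 hjsgn]
  · simp at hisgn

/-- Let `(w, w')` be a tuning pair. For any two admissible infinite binary
sequences `v, v'`, one has `v < v'` (in the binary order) iff `w*v < w*v'` (in the order
on `Σ`). -/
theorem statement16 (E : ℕ → ℕ → Prop) (O : ℕ → ℤ) (N : ℕ) (hG : GoodGraph E O N)
    (w w' : List ℕ) (hpair : TuningPair E O N w w')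
    (v v' : ℕ → ℕ) (hv : AdmissibleSeq E2 O2 1 v) (hv' : AdmissibleSeq E2 O2 1 v') :
    SeqLt O2 v v' ↔ SeqLt O (tuningSeq w w' v) (tuningSeq w w' v') := by
  have hv1 : ∀ n, v n ≤ 1 := fun n => (hv.1 n).1
  have hv1' : ∀ n, v' n ≤ 1 := fun n => (hv'.1 n).1
  constructor
  · exact tuning_lt E O N w w' hpair v v' hv1 hv1'
  · intro h
    by_contra h2
    by_cases he : v = v'
    · subst he; exact seqLt_irrefl O _ h
    · rcases o2_trichotomy v v' he with h3 | h3
      · exact h2 h3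
      · exact seqLt_asymm O _ _ h (tuning_lt E O N w w' hpair v' v hv1' hv1 h3)
end
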